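/- arXiv:1304.7136 — 2 statements merged into one kernel-verified Lean document; each statement's English description precedes it below -/
import Mathlib

section
/- For all s > 0, λ > 0, every t ∈ (0,T) and every x ∈ cl(G), the time derivative of the Carleman weight ℓ satisfies |∂ₜℓ(t,x)| ≤ 2T·s·φ(t,x)^{3/2}. -/
/-!
Since `∂ₜℓ = -2s (e^{4λψ} - e^{5λM}) (T - 2t) / (t(T - t))³`, and both exponentials lie in
`(0, e^{6λψ}]` (the second because `ψ ≥ 5M/6`), while `|T - 2t| ≤ T` and
`φ^{3/2} = e^{6λψ} / (t(T - t))³`, the bound follows.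
-/

open Real Set

theorem hasDerivAt_div_sq_mul_sq (c T : ℝ) {t : ℝ} (ht : t ≠ 0) (hTt : T - t ≠ 0) :
    HasDerivAt (fun τ => c / (τ ^ 2 * (T - τ) ^ 2))
      (-(2 * c * (T - 2 * t)) / (t * (T - t)) ^ 3) t := by
  have hprod : HasDerivAt (fun τ => τ * (T - τ)) (T - 2 * t) t :=
    ((hasDerivAt_id' t).fun_mul ((hasDerivAt_const t T).fun_sub (hasDerivAt_id' t))).congr_deriv
      (by ring)
  have hquot := (hasDerivAt_const t c).fun_div (hprod.fun_pow 2)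
    (pow_ne_zero 2 (mul_ne_zero ht hTt))
  rw [show (fun τ => c / (τ ^ 2 * (T - τ) ^ 2)) = fun τ => c / (τ * (T - τ)) ^ 2 by
    funext τ; ring]
  exact hquot.congr_deriv (by field_simp; ring)

theorem abs_deriv_div_sq_mul_sq_le {c E T t : ℝ} (ht : t ∈ Ioo 0 T) (hc : |c| ≤ E) :
    |deriv (fun τ => c / (τ ^ 2 * (T - τ) ^ 2)) t| ≤ 2 * T * E / (t * (T - t)) ^ 3 := by
  obtain ⟨ht0, htT⟩ := ht
  have hu : 0 < t * (T - t) := mul_pos ht0 (sub_pos.mpr htT)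
  rw [(hasDerivAt_div_sq_mul_sq c T ht0.ne' (sub_pos.mpr htT).ne').deriv, abs_div, abs_neg,
    abs_of_pos (pow_pos hu 3)]
  have hT : |T - 2 * t| ≤ T := abs_le.mpr ⟨by linarith, by linarith⟩
  gcongr
  calc |2 * c * (T - 2 * t)| = 2 * |c| * |T - 2 * t| := by
        rw [abs_mul, abs_mul, abs_two]
    _ ≤ 2 * T * E := by nlinarith [abs_nonneg c, abs_nonneg (T - 2 * t)]

theorem abs_exp_sub_exp_le_exp {a b c : ℝ} (ha : a ≤ c) (hb : b ≤ c) :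
    |exp a - exp b| ≤ exp c :=
  abs_sub_le_of_nonneg_of_le (exp_pos a).le (exp_le_exp.mpr ha) (exp_pos b).le
    (exp_le_exp.mpr hb)

theorem div_sq_rpow_three_halves {y u : ℝ} (hy : 0 ≤ y) (hu : 0 ≤ u) :
    (y / u ^ 2) ^ (3 / 2 : ℝ) = y ^ (3 / 2 : ℝ) / u ^ 3 := by
  rw [div_rpow hy (by positivity), ← rpow_natCast_mul hu]
  norm_num

theorem carleman_weight_time_deriv_bound_general
    {n : ℕ}
    (G : Set (EuclideanSpace ℝ (Fin n)))
    (x₀ : EuclideanSpace ℝ (Fin n))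
    (T : ℝ)
    (σ : ℝ) (hσ : 0 < σ)
    (ψ : EuclideanSpace ℝ (Fin n) → ℝ)
    (hψ : ψ = fun x => ‖x - x₀‖ ^ 2 + σ)
    (M : ℝ)
    (hψM : ∀ x ∈ closure G, ψ x ≥ 5 / 6 * M)
    (s lam : ℝ) (hs : 0 < s) (hlam : 0 < lam)
    (ℓ φ : ℝ → EuclideanSpace ℝ (Fin n) → ℝ)
    (hℓ : ℓ = fun t x =>
      s * (Real.exp (4 * lam * ψ x) - Real.exp (5 * lam * M)) /
        (t ^ 2 * (T - t) ^ 2))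
    (hφ : φ = fun t x => Real.exp (4 * lam * ψ x) / (t ^ 2 * (T - t) ^ 2))
    (t : ℝ) (ht : t ∈ Set.Ioo 0 T)
    (x : EuclideanSpace ℝ (Fin n)) (hx : x ∈ closure G) :
    |deriv (fun τ => ℓ τ x) t| ≤ 2 * T * s * φ t x ^ ((3 : ℝ) / 2) := by
  have hψx : 0 ≤ ψ x := by rw [hψ]; positivity
  have hexp : |exp (4 * lam * ψ x) - exp (5 * lam * M)| ≤ exp (6 * lam * ψ x) :=
    abs_exp_sub_exp_le_exp (by nlinarith) (by nlinarith [hψM x hx])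
  have hu : 0 ≤ t * (T - t) := mul_nonneg ht.1.le (sub_nonneg.mpr ht.2.le)
  subst hℓ hφ
  calc _ ≤ 2 * T * (s * exp (6 * lam * ψ x)) / (t * (T - t)) ^ 3 :=
        abs_deriv_div_sq_mul_sq_le ht (by rw [abs_mul, abs_of_pos hs]; gcongr)
    _ = 2 * T * s * (exp (4 * lam * ψ x) / (t ^ 2 * (T - t) ^ 2)) ^ ((3 : ℝ) / 2) := by
        rw [← mul_pow, div_sq_rpow_three_halves (exp_pos _).le hu, ← exp_mul]
        ring_nf

/-- For all `s > 0`, `λ > 0`, every `t ∈ (0,T)` and every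
`x ∈ cl(G)`, the time derivative of the Carleman weight `ℓ` satisfies
`|∂ₜℓ(t,x)| ≤ 2T·s·φ(t,x)^{3/2}`. -/
theorem carleman_weight_time_deriv_bound
    {n : ℕ} (hn : 1 ≤ n)
    (G : Set (EuclideanSpace ℝ (Fin n))) (hG : Bornology.IsBounded G)
    (x₀ : EuclideanSpace ℝ (Fin n)) (hx₀ : x₀ ∉ closure G)
    (T : ℝ) (hT : 0 < T)
    (σ : ℝ) (hσ : 0 < σ)
    (ψ : EuclideanSpace ℝ (Fin n) → ℝ)
    (hψ : ψ = fun x => ‖x - x₀‖ ^ 2 + σ)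
    (M : ℝ) (hM : M = sSup (ψ '' closure G))
    (hψM : ∀ x ∈ closure G, ψ x ≥ 5 / 6 * M)
    (s lam : ℝ) (hs : 0 < s) (hlam : 0 < lam)
    (ℓ φ : ℝ → EuclideanSpace ℝ (Fin n) → ℝ)
    (hℓ : ℓ = fun t x =>
      s * (Real.exp (4 * lam * ψ x) - Real.exp (5 * lam * M)) /
        (t ^ 2 * (T - t) ^ 2))
    (hφ : φ = fun t x => Real.exp (4 * lam * ψ x) / (t ^ 2 * (T - t) ^ 2))
    (t : ℝ) (ht : t ∈ Set.Ioo 0 T)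
    (x : EuclideanSpace ℝ (Fin n)) (hx : x ∈ closure G) :
    |deriv (fun τ => ℓ τ x) t| ≤ 2 * T * s * φ t x ^ ((3 : ℝ) / 2) :=
  carleman_weight_time_deriv_bound_general G x₀ T σ hσ ψ hψ M hψM s lam hs hlam ℓ φ hℓ hφ t ht x hx
end

section
/- There exists a constant C > 0, depending only on T and sup_{x ∈ cl(G)} |∇ψ(x)|, such that for all s > 0, λ > 0, every t ∈ (0,T), every x ∈ cl(G), every a ∈ ℂ and every w = (w₁,…,wₙ) ∈ ℂⁿ, the mixed-derivative cross term satisfies |2i·Σ_{j=1}^n 2·∂ₜ∂ⱼℓ(t,x)·(conj(wⱼ)·a − wⱼ·conj(a))| ≤ 2 s·φ(t,x)·|w|² + C·s·λ²·φ(t,x)²·|a|². -/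
/-!
With `D = t²(T - t)²`, `e = exp (4λψ(x))` and `φ = e / D`, the mixed derivative is explicit:
`∂ₜ∂ⱼℓ = -8sλe (x - x₀)ⱼ D' / D²` with `D' = 2t(T - t)(T - 2t)`, so `D'² = 4D(T - 2t)² ≤ 4DT²`.
Since `|conj w · a - w · conj a| ≤ 2|w||a|`, Young's inequality with weight `sφ` bounds the cross
term by `2sφ|w|² + (2 / (sφ)) Σⱼ (2∂ₜ∂ⱼℓ)² |a|²`, and the last coefficient is at most
`2048 T² |x - x₀|² sλ²φ² / e`. Finally `e ≥ 1` because `ψ ≥ σ > 0`, and `|x - x₀|` is bounded on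
the bounded set `cl(G)`.
-/

open scoped ComplexConjugate

theorem norm_conj_mul_sub_mul_conj_le (z a : ℂ) : ‖conj z * a - z * conj a‖ ≤ 2 * ‖z‖ * ‖a‖ :=
  calc ‖conj z * a - z * conj a‖ ≤ ‖conj z * a‖ + ‖z * conj a‖ := norm_sub_le _ _
    _ = 2 * ‖z‖ * ‖a‖ := by simp only [norm_mul, RCLike.norm_conj]; ring

theorem abs_mul_norm_conj_mul_sub_le {P : ℝ} (hP : 0 < P) (f : ℝ) (z a : ℂ) :
    |f| * ‖conj z * a - z * conj a‖ ≤ P * ‖z‖ ^ 2 + f ^ 2 / P * ‖a‖ ^ 2 := by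
  have hyoung : 2 * |f| * ‖z‖ * ‖a‖ ≤ P * ‖z‖ ^ 2 + f ^ 2 / P * ‖a‖ ^ 2 := by
    have hsq : 0 ≤ (P * ‖z‖ - |f| * ‖a‖) ^ 2 / P := by positivity
    rw [sub_sq, mul_pow, mul_pow, sq_abs] at hsq
    field_simp at hsq ⊢
    nlinarith [hsq]
  calc |f| * ‖conj z * a - z * conj a‖ ≤ |f| * (2 * ‖z‖ * ‖a‖) := by
        gcongr; exact norm_conj_mul_sub_mul_conj_le z a
    _ ≤ _ := by linarith

theorem norm_two_I_mul_sum_conj_mul_sub_le {ι : Type*} [Fintype ι] {P : ℝ} (hP : 0 < P)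
    (F : ι → ℝ) (a : ℂ) (w : ι → ℂ) :
    ‖2 * Complex.I * ∑ j, (F j : ℂ) * (conj (w j) * a - w j * conj a)‖ ≤
      2 * P * ∑ j, ‖w j‖ ^ 2 + 2 / P * (∑ j, F j ^ 2) * ‖a‖ ^ 2 := by
  calc ‖2 * Complex.I * ∑ j, (F j : ℂ) * (conj (w j) * a - w j * conj a)‖
      ≤ 2 * ∑ j, |F j| * ‖conj (w j) * a - w j * conj a‖ := by
        rw [norm_mul, norm_mul, Complex.norm_I, Complex.norm_two, mul_one]
        gcongr
        exact norm_sum_le_of_le _ fun j _ => by rw [norm_mul, Complex.norm_real, Real.norm_eq_abs]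
    _ ≤ 2 * ∑ j, (P * ‖w j‖ ^ 2 + F j ^ 2 / P * ‖a‖ ^ 2) := by
        gcongr with j; exact abs_mul_norm_conj_mul_sub_le hP _ _ _
    _ = _ := by
        rw [Finset.sum_add_distrib, ← Finset.mul_sum, ← Finset.sum_mul, ← Finset.sum_div]; ring

section InnerProductSpace

variable {E : Type*} [NormedAddCommGroup E] [InnerProductSpace ℝ E]

theorem hasFDerivAt_exp_mul_norm_sub_sq_add (c σ : ℝ) (x₀ x : E) :
    HasFDerivAt (fun y => Real.exp (c * (‖y - x₀‖ ^ 2 + σ)))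
      ((2 * c * Real.exp (c * (‖x - x₀‖ ^ 2 + σ))) • innerSL ℝ (x - x₀)) x := by
  refine ((((hasFDerivAt_id x).sub_const x₀).norm_sq.add_const σ).const_mul c).exp.congr_fderiv ?_
  ext v
  simp only [id, smul_apply, ContinuousLinearMap.comp_apply,
    ContinuousLinearMap.id_apply, smul_eq_mul, nsmul_eq_mul]
  ring

theorem fderiv_mul_exp_mul_norm_sub_sq_add_sub_div_apply (s c σ K d : ℝ) (x₀ x v : E) :
    fderiv ℝ (fun y => s * (Real.exp (c * (‖y - x₀‖ ^ 2 + σ)) - K) / d) x v =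
      2 * c * s * Real.exp (c * (‖x - x₀‖ ^ 2 + σ)) * inner ℝ (x - x₀) v / d := by
  have h := (((hasFDerivAt_exp_mul_norm_sub_sq_add c σ x₀ x).sub_const K).const_mul s).mul_const d⁻¹
  simp only [div_eq_mul_inv, h.fderiv]
  simp only [map_sub, smul_apply, sub_apply, coe_innerSL_apply, smul_eq_mul, inner_sub_left]
  ring

theorem hasDerivAt_div_sq_mul_sub_sq (c : ℝ) {t T : ℝ} (ht : t ≠ 0) (htT : t ≠ T) :
    HasDerivAt (fun τ => c / (τ ^ 2 * (T - τ) ^ 2))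
      (-(c * (2 * t * (T - t) * (T - 2 * t))) / (t ^ 2 * (T - t) ^ 2) ^ 2) t := by
  have hD : t ^ 2 * (T - t) ^ 2 ≠ 0 := by
    have : T - t ≠ 0 := sub_ne_zero.2 htT.symm
    positivity
  have hden : HasDerivAt (fun τ => τ ^ 2 * (T - τ) ^ 2) (2 * t * (T - t) * (T - 2 * t)) t :=
    ((hasDerivAt_pow 2 t).fun_mul (((hasDerivAt_id t).const_sub T).fun_pow 2)).congr_deriv
      (by simp only [id]; ring)
  exact ((hasDerivAt_const t c).fun_div hden hD).congr_deriv (by ring)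

theorem deriv_fderiv_mul_exp_mul_norm_sub_sq_add_sub_div_apply (s c σ K : ℝ) {t T : ℝ}
    (ht : t ≠ 0) (htT : t ≠ T) (x₀ x v : E) :
    deriv (fun τ => fderiv ℝ (fun y =>
        s * (Real.exp (c * (‖y - x₀‖ ^ 2 + σ)) - K) / (τ ^ 2 * (T - τ) ^ 2)) x v) t =
      -(2 * c * s * Real.exp (c * (‖x - x₀‖ ^ 2 + σ)) * (2 * t * (T - t) * (T - 2 * t)) /
        (t ^ 2 * (T - t) ^ 2) ^ 2) * inner ℝ (x - x₀) v := by
  simp only [fderiv_mul_exp_mul_norm_sub_sq_add_sub_div_apply]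
  rw [(hasDerivAt_div_sq_mul_sub_sq _ ht htT).deriv]
  ring

end InnerProductSpace

theorem two_div_mul_sq_mixed_coeff_le {s lam e t T : ℝ} (hs : 0 < s) (he : 1 ≤ e)
    (ht : 0 < t) (htT : t < T) :
    2 / (s * (e / (t ^ 2 * (T - t) ^ 2))) *
        (2 * -(2 * (4 * lam) * s * e * (2 * t * (T - t) * (T - 2 * t)) /
          (t ^ 2 * (T - t) ^ 2) ^ 2)) ^ 2 ≤
      2048 * T ^ 2 * (s * lam ^ 2 * (e / (t ^ 2 * (T - t) ^ 2)) ^ 2) := by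
  have hTt : 0 < T - t := by linarith
  have he0 : 0 < e := by linarith
  have hmid : (T - 2 * t) ^ 2 / e ≤ T ^ 2 := by
    rw [div_le_iff₀ he0]
    nlinarith
  calc _ = 2048 * ((T - 2 * t) ^ 2 / e) * (s * lam ^ 2 * (e / (t ^ 2 * (T - t) ^ 2)) ^ 2) := by
        field_simp
        ring
    _ ≤ _ := by gcongr

theorem two_div_mul_sum_sq_mixed_coeff_le {ι : Type*} [Fintype ι] {s lam e t T R : ℝ}
    (hs : 0 < s) (he : 1 ≤ e) (ht : 0 < t) (htT : t < T) (v : EuclideanSpace ℝ ι)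
    (hv : ‖v‖ ≤ R) :
    2 / (s * (e / (t ^ 2 * (T - t) ^ 2))) *
        ∑ j, (2 * (-(2 * (4 * lam) * s * e * (2 * t * (T - t) * (T - 2 * t)) /
          (t ^ 2 * (T - t) ^ 2) ^ 2) * v j)) ^ 2 ≤
      2048 * T ^ 2 * R ^ 2 * s * lam ^ 2 * (e / (t ^ 2 * (T - t) ^ 2)) ^ 2 := by
  have hR : ‖v‖ ^ 2 ≤ R ^ 2 := pow_le_pow_left₀ (norm_nonneg v) hv 2
  set κ := -(2 * (4 * lam) * s * e * (2 * t * (T - t) * (T - 2 * t)) / (t ^ 2 * (T - t) ^ 2) ^ 2)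
  have hsum : ∑ j, (2 * (κ * v j)) ^ 2 = (2 * κ) ^ 2 * ‖v‖ ^ 2 := by
    rw [EuclideanSpace.real_norm_sq_eq, Finset.mul_sum]
    exact Finset.sum_congr rfl fun j _ => by ring
  rw [hsum, ← mul_assoc]
  calc _ ≤ 2048 * T ^ 2 * (s * lam ^ 2 * (e / (t ^ 2 * (T - t) ^ 2)) ^ 2) * R ^ 2 :=
        mul_le_mul (two_div_mul_sq_mixed_coeff_le hs he ht htT) hR (by positivity) (by positivity)
    _ = _ := by ring

theorem carleman_cross_term_bound_general
    {n : ℕ}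
    (G : Set (EuclideanSpace ℝ (Fin n))) (hG : Bornology.IsBounded G)
    (x₀ : EuclideanSpace ℝ (Fin n))
    (T : ℝ)
    (σ : ℝ) (hσ : 0 < σ)
    (ψ : EuclideanSpace ℝ (Fin n) → ℝ)
    (hψ : ψ = fun x => ‖x - x₀‖ ^ 2 + σ)
    (M : ℝ)
    (ℓ : ℝ → ℝ → ℝ → EuclideanSpace ℝ (Fin n) → ℝ)
    (hℓ : ℓ = fun s lam t x =>
      s * (Real.exp (4 * lam * ψ x) - Real.exp (5 * lam * M)) /
        (t ^ 2 * (T - t) ^ 2))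
    (φ : ℝ → ℝ → EuclideanSpace ℝ (Fin n) → ℝ)
    (hφ : φ = fun lam t x => Real.exp (4 * lam * ψ x) / (t ^ 2 * (T - t) ^ 2)) :
    ∃ C : ℝ, 0 < C ∧
      ∀ s lam : ℝ, 0 < s → 0 < lam →
      ∀ t ∈ Set.Ioo (0 : ℝ) T, ∀ x ∈ closure G, ∀ a : ℂ, ∀ w : Fin n → ℂ,
        norm
            (2 * Complex.I *
              ∑ j : Fin n,
                ((2 * deriv
                    (fun τ => fderiv ℝ (fun y => ℓ s lam τ y) x
                      (EuclideanSpace.single j (1 : ℝ))) t : ℝ) : ℂ) *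
                  (conj (w j) * a - w j * conj a)) ≤
          2 * s * φ lam t x * (∑ j : Fin n, norm (w j) ^ 2) +
            C * s * lam ^ 2 * φ lam t x ^ 2 * norm a ^ 2 := by
  subst hψ hℓ hφ
  obtain ⟨R, hR⟩ := hG.closure.subset_closedBall x₀
  refine ⟨2048 * T ^ 2 * R ^ 2 + 1, by positivity, ?_⟩
  rintro s lam hs hlam t ⟨ht, htT⟩ x hx a w
  simp only [deriv_fderiv_mul_exp_mul_norm_sub_sq_add_sub_div_apply _ _ _ _ ht.ne' htT.ne,
    EuclideanSpace.inner_single_right, conj_trivial, one_mul]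
  have he : 1 ≤ Real.exp (4 * lam * (‖x - x₀‖ ^ 2 + σ)) := Real.one_le_exp (by positivity)
  have hP : 0 < s * (Real.exp (4 * lam * (‖x - x₀‖ ^ 2 + σ)) / (t ^ 2 * (T - t) ^ 2)) := by
    positivity
  refine (norm_two_I_mul_sum_conj_mul_sub_le hP _ a w).trans ?_
  rw [mul_assoc 2 s]
  gcongr _ + ?_ * _
  refine (two_div_mul_sum_sq_mixed_coeff_le hs he ht htT _
    (mem_closedBall_iff_norm.1 (hR hx))).trans ?_
  gcongr ?_ * _ * _ * _
  linarith

/-- There is `C > 0` (depending only on `T` and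
`sup_{cl(G)} |∇ψ|`) such that for all `s > 0`, `λ > 0`, `t ∈ (0,T)`,
`x ∈ cl(G)`, `a ∈ ℂ` and `w ∈ ℂⁿ`, the mixed-derivative cross term satisfies
`|2i·Σⱼ 2∂ₜ∂ⱼℓ·(conj(wⱼ)a − wⱼ conj(a))| ≤ 2sφ|w|² + C sλ²φ²|a|²`. -/
theorem carleman_cross_term_bound
    {n : ℕ} (hn : 1 ≤ n)
    (G : Set (EuclideanSpace ℝ (Fin n))) (hG : Bornology.IsBounded G)
    (x₀ : EuclideanSpace ℝ (Fin n)) (hx₀ : x₀ ∉ closure G)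
    (T : ℝ) (hT : 0 < T)
    (σ : ℝ) (hσ : 0 < σ)
    (ψ : EuclideanSpace ℝ (Fin n) → ℝ)
    (hψ : ψ = fun x => ‖x - x₀‖ ^ 2 + σ)
    (M : ℝ) (hM : M = sSup (ψ '' closure G))
    (hψM : ∀ x ∈ closure G, ψ x ≥ 5 / 6 * M)
    (ℓ : ℝ → ℝ → ℝ → EuclideanSpace ℝ (Fin n) → ℝ)
    (hℓ : ℓ = fun s lam t x =>
      s * (Real.exp (4 * lam * ψ x) - Real.exp (5 * lam * M)) /
        (t ^ 2 * (T - t) ^ 2))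
    (φ : ℝ → ℝ → EuclideanSpace ℝ (Fin n) → ℝ)
    (hφ : φ = fun lam t x => Real.exp (4 * lam * ψ x) / (t ^ 2 * (T - t) ^ 2)) :
    ∃ C : ℝ, 0 < C ∧
      ∀ s lam : ℝ, 0 < s → 0 < lam →
      ∀ t ∈ Set.Ioo (0 : ℝ) T, ∀ x ∈ closure G, ∀ a : ℂ, ∀ w : Fin n → ℂ,
        norm
            (2 * Complex.I *
              ∑ j : Fin n,
                ((2 * deriv
                    (fun τ => fderiv ℝ (fun y => ℓ s lam τ y) x
                      (EuclideanSpace.single j (1 : ℝ))) t : ℝ) : ℂ) *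
                  (conj (w j) * a - w j * conj a)) ≤
          2 * s * φ lam t x * (∑ j : Fin n, norm (w j) ^ 2) +
            C * s * lam ^ 2 * φ lam t x ^ 2 * norm a ^ 2 :=
  carleman_cross_term_bound_general G hG x₀ T σ hσ ψ hψ M ℓ hℓ φ hφ
end
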